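/- For the Gamma(τa,1) prior with Gaussian observation as above, if τa < 1/2 and λ ≠ γ̄a, then as |λ − γ̄a| → 0 the conditional expectation E[Γ | Λ = λ] converges to (Γ(τa + 1/2)/Γ(1/2 − τa)) · (2σ²)^{2τa} / (2σ² + μ²)^{(2τa+1)/2} · |λ − γ̄a|^{1−2τa} · (1 + o(1)), while if τa > 1/2 it converges to (τa − 1/2) · 2σ²/(2σ² + μ²). -/

import Mathlib

open MeasureTheory Real Set Filter Topology

/-!
Given `Λ = λ`, the density of `Γ` is proportional to `g ^ (τa - 3/2) * exp (-b/g - c g)` with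
`b = (λ - γ̄a)² / (2σ²)` and `c = (2σ² + μ²) / (2σ²)`, a generalized inverse Gaussian law, so
`E[Γ | Λ = λ] = J_{τa+1/2}(c, b) / J_{τa-1/2}(c, b)` where
`J_ν(c, b) = gigIntegral ν c b = ∫₀^∞ g^(ν-1) e^(-b/g - cg) dg`.
As `b → 0⁺`, dominated convergence gives `J_ν(c, b) → Γ(ν) c^(-ν)` for `ν > 0`. For `ν < 0` the
substitution `g ↦ 1/g` gives `J_ν(c, b) = J_{-ν}(b, c)`, and after rescaling `g ↦ b g` this yields
`J_ν(c, b) ~ Γ(-ν) b^ν`. The two regimes are the two signs of `ν = τa - 1/2`.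
-/

/-- Joint density of `(Λ, Γ)` at `(λ, g)` in the hierarchical model
`Γ ~ Gamma(τa, 1)`, `Λ | Γ = g ~ N(γ̄a + μg, σ²g)`. -/
noncomputable def jointDensity (τ a γbar μ σ lam g : ℝ) : ℝ :=
  Real.exp (-(lam - γbar * a - μ * g) ^ 2 / (2 * σ ^ 2 * g)) /
      Real.sqrt (2 * π * σ ^ 2 * g) *
    (g ^ (τ * a - 1) * Real.exp (-g) / Real.Gamma (τ * a))

/-- The conditional expectation `E[Γ | Λ = λ]`. -/
noncomputable def condMeanGamma (τ a γbar μ σ lam : ℝ) : ℝ :=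
  (∫ g in Ioi (0 : ℝ), g * jointDensity τ a γbar μ σ lam g) /
    ∫ g in Ioi (0 : ℝ), jointDensity τ a γbar μ σ lam g

/-- For `b, c > 0` this is `2 (b/c)^(ν/2) K_ν(2√(bc))`. -/
noncomputable def gigIntegral (ν c b : ℝ) : ℝ :=
  ∫ g in Ioi (0 : ℝ), g ^ (ν - 1) * exp (-(b / g) - c * g)

lemma gigIntegral_zero {ν c : ℝ} (hν : 0 < ν) (hc : 0 < c) :
    gigIntegral ν c 0 = Gamma ν / c ^ ν := by
  have h := integral_rpow_mul_exp_neg_mul_Ioi hν hc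
  simp only [gigIntegral, zero_div, neg_zero, zero_sub]
  rw [h, one_div, inv_rpow hc.le, div_eq_mul_inv, mul_comm]

lemma continuousWithinAt_gigIntegral_zero {ν c : ℝ} (hν : 0 < ν) (hc : 0 < c) :
    ContinuousWithinAt (gigIntegral ν c) (Ici 0) 0 := by
  refine continuousWithinAt_of_dominated (bound := fun g => g ^ (ν - 1) * exp (-(c * g)))
    (Eventually.of_forall fun b => by fun_prop) ?_ ?_ ?_
  · filter_upwards [self_mem_nhdsWithin] with b (hb : 0 ≤ b)
    filter_upwards [ae_restrict_mem measurableSet_Ioi] with g (hg : 0 < g)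
    rw [norm_of_nonneg (by positivity)]
    gcongr
    linarith [div_nonneg hb hg.le]
  · have h := integrableOn_rpow_mul_exp_neg_mul_rpow (by linarith : -1 < ν - 1) one_pos hc
    simp only [rpow_one, neg_mul] at h
    exact h
  · exact Eventually.of_forall fun g => by fun_prop

lemma tendsto_gigIntegral_nhdsGT_zero {ν c : ℝ} (hν : 0 < ν) (hc : 0 < c) :
    Tendsto (gigIntegral ν c) (𝓝[>] 0) (𝓝 (Gamma ν / c ^ ν)) :=
  gigIntegral_zero hν hc ▸ (continuousWithinAt_gigIntegral_zero hν hc).tendsto.mono_left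
    (nhdsWithin_mono _ Ioi_subset_Ici_self)

lemma gigIntegral_neg (ν c b : ℝ) : gigIntegral (-ν) b c = gigIntegral ν c b := by
  rw [gigIntegral, ← integral_comp_rpow_Ioi _ (neg_ne_zero.mpr one_ne_zero), gigIntegral]
  refine setIntegral_congr_fun measurableSet_Ioi fun g (hg : 0 < g) => ?_
  have hpow : g ^ (-1 - 1 : ℝ) * g ^ (-(-ν - 1)) = g ^ (ν - 1) := by
    rw [← rpow_add hg]; ring_nf
  rw [rpow_neg_one, inv_rpow hg.le, ← rpow_neg hg.le, abs_neg, abs_one, one_mul, smul_eq_mul,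
    div_inv_eq_mul, ← div_eq_mul_inv, ← mul_assoc, hpow]
  ring_nf

lemma gigIntegral_eq_rpow_mul (ν c b : ℝ) {k : ℝ} (hk : 0 < k) :
    gigIntegral ν c b = k ^ ν * gigIntegral ν (k * c) (b / k) := by
  have h := integral_comp_mul_left_Ioi (fun g => g ^ (ν - 1) * exp (-(b / g) - c * g)) 0 hk
  rw [mul_zero, smul_eq_mul] at h
  rw [gigIntegral, gigIntegral, ← mul_inv_cancel_left₀ hk.ne' (∫ g in Ioi 0, _), ← h,
    ← integral_const_mul, ← integral_const_mul]
  refine setIntegral_congr_fun measurableSet_Ioi fun x (hx : 0 < x) => ?_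
  rw [mul_rpow hk.le hx.le, rpow_sub_one hk.ne', div_div]
  field_simp

lemma tendsto_gigIntegral_div_rpow_nhdsGT_zero {ν c : ℝ} (hν : ν < 0) (hc : 0 < c) :
    Tendsto (fun b => gigIntegral ν c b / b ^ ν) (𝓝[>] 0) (𝓝 (Gamma (-ν))) := by
  have hbc : Tendsto (fun b => b * c) (𝓝[>] 0) (𝓝[>] 0) :=
    tendsto_nhdsWithin_of_tendsto_nhds_of_eventually_within _
      (((continuous_mul_const c).tendsto' 0 0 (zero_mul c)).mono_left nhdsWithin_le_nhds)
      (eventually_nhdsWithin_of_forall fun b (hb : 0 < b) => mul_pos hb hc)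
  have h := (tendsto_gigIntegral_nhdsGT_zero (neg_pos.mpr hν) one_pos).comp hbc
  rw [one_rpow, div_one] at h
  refine h.congr' (eventually_nhdsWithin_of_forall fun b (hb : 0 < b) => ?_)
  change gigIntegral (-ν) 1 (b * c) = gigIntegral ν c b / b ^ ν
  rw [gigIntegral_eq_rpow_mul ν c b hb, div_self hb.ne', ← gigIntegral_neg,
    neg_neg, mul_div_cancel_left₀ _ (rpow_pos_of_pos hb ν).ne']

lemma tendsto_gigIntegral_add_one_div {ν c : ℝ} (hν : 0 < ν) (hc : 0 < c) :
    Tendsto (fun b => gigIntegral (ν + 1) c b / gigIntegral ν c b) (𝓝[>] 0) (𝓝 (ν / c)) := by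
  have hΓ : 0 < Gamma ν := Gamma_pos_of_pos hν
  have hlim : Gamma (ν + 1) / c ^ (ν + 1) / (Gamma ν / c ^ ν) = ν / c := by
    rw [Gamma_add_one hν.ne', rpow_add_one hc.ne']
    field_simp
  rw [← hlim]
  exact (tendsto_gigIntegral_nhdsGT_zero (by linarith) hc).div
    (tendsto_gigIntegral_nhdsGT_zero hν hc) (div_pos hΓ (rpow_pos_of_pos hc ν)).ne'

lemma tendsto_gigIntegral_add_one_div_mul_rpow {ν c : ℝ} (hν₁ : -1 < ν) (hν₀ : ν < 0)
    (hc : 0 < c) :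
    Tendsto (fun b => gigIntegral (ν + 1) c b / gigIntegral ν c b * b ^ ν) (𝓝[>] 0)
      (𝓝 (Gamma (ν + 1) / Gamma (-ν) / c ^ (ν + 1))) := by
  rw [div_right_comm]
  refine ((tendsto_gigIntegral_nhdsGT_zero (ν := ν + 1) (by linarith) hc).div
    (tendsto_gigIntegral_div_rpow_nhdsGT_zero hν₀ hc)
    (Gamma_pos_of_pos (neg_pos.mpr hν₀)).ne').congr' ?_
  filter_upwards with b
  rw [Pi.div_apply, div_div_eq_mul_div, div_mul_eq_mul_div]

lemma mul_abs_rpow_mul_sq_div_rpow (G t : ℝ) {s m δ : ℝ} (hs : 0 < s) (hm : 0 < m) (hδ : δ ≠ 0) :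
    G * (s ^ (2 * t) / m ^ ((2 * t + 1) / 2)) * |δ| ^ (1 - 2 * t) * (δ ^ 2 / s) ^ (t - 1 / 2) =
      G / (m / s) ^ (t + 1 / 2) := by
  have habs : 0 < |δ| := abs_pos.mpr hδ
  have hδpow : |δ| ^ (1 - 2 * t) * (δ ^ 2) ^ (t - 1 / 2) = 1 := by
    rw [← sq_abs, ← rpow_natCast_mul habs.le, ← rpow_add habs, Nat.cast_ofNat,
      show 1 - 2 * t + 2 * (t - 1 / 2) = 0 by ring, rpow_zero]
  have hspow : s ^ (2 * t) / s ^ (t - 1 / 2) = s ^ (t + 1 / 2) := by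
    rw [← rpow_sub hs]
    ring_nf
  rw [div_rpow (sq_nonneg δ) hs.le, div_rpow hm.le hs.le, show (2 * t + 1) / 2 = t + 1 / 2 by ring,
    ← hspow]
  field_simp
  rw [show (2 * t - 1) / 2 = t - 1 / 2 by ring, mul_assoc, hδpow, mul_one]

lemma tendsto_sub_sq_div_nhdsGT_zero (x₀ : ℝ) {s : ℝ} (hs : 0 < s) :
    Tendsto (fun x => (x - x₀) ^ 2 / s) (𝓝[≠] x₀) (𝓝[>] 0) := by
  refine tendsto_nhdsWithin_of_tendsto_nhds_of_eventually_within _ ?_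
    (eventually_nhdsWithin_of_forall fun x (hx : x ≠ x₀) => by
      have := sub_ne_zero.mpr hx
      exact mem_Ioi.mpr (by positivity))
  have h : Continuous fun x => (x - x₀) ^ 2 / s := by fun_prop
  simpa using (h.tendsto x₀).mono_left nhdsWithin_le_nhds

lemma jointDensity_eq {τ a γbar μ σ lam g : ℝ} (hσ : σ ≠ 0) (hg : 0 < g) :
    jointDensity τ a γbar μ σ lam g =
      exp ((lam - γbar * a) * μ / σ ^ 2) / (sqrt (2 * π * σ ^ 2) * Gamma (τ * a)) *
        (g ^ (τ * a - 1 / 2 - 1) * exp (-((lam - γbar * a) ^ 2 / (2 * σ ^ 2) / g) -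
          (2 * σ ^ 2 + μ ^ 2) / (2 * σ ^ 2) * g)) := by
  have hexp : exp (-(lam - γbar * a - μ * g) ^ 2 / (2 * σ ^ 2 * g)) * exp (-g) =
      exp ((lam - γbar * a) * μ / σ ^ 2) * exp (-((lam - γbar * a) ^ 2 / (2 * σ ^ 2) / g) -
          (2 * σ ^ 2 + μ ^ 2) / (2 * σ ^ 2) * g) := by
    rw [← exp_add, ← exp_add]
    congr 1
    field_simp
    ring
  have hpow : g ^ (τ * a - 1) = g ^ (τ * a - 1 / 2 - 1) * sqrt g := by
    rw [sqrt_eq_rpow, ← rpow_add hg]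
    ring_nf
  have hsqrt : 0 < sqrt g := sqrt_pos.mpr hg
  rw [jointDensity, sqrt_mul (by positivity) g, hpow]
  linear_combination (norm := skip)
    g ^ (τ * a - 1 / 2 - 1) / (sqrt (2 * π * σ ^ 2) * Gamma (τ * a)) * hexp
  field_simp
  ring

lemma condMeanGamma_eq {τ a γbar μ σ : ℝ} (lam : ℝ) (ht : 0 < τ * a) (hσ : σ ≠ 0) :
    condMeanGamma τ a γbar μ σ lam =
      gigIntegral (τ * a + 1 / 2) ((2 * σ ^ 2 + μ ^ 2) / (2 * σ ^ 2))
          ((lam - γbar * a) ^ 2 / (2 * σ ^ 2)) /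
        gigIntegral (τ * a - 1 / 2) ((2 * σ ^ 2 + μ ^ 2) / (2 * σ ^ 2))
          ((lam - γbar * a) ^ 2 / (2 * σ ^ 2)) := by
  have hC : exp ((lam - γbar * a) * μ / σ ^ 2) / (sqrt (2 * π * σ ^ 2) * Gamma (τ * a)) ≠ 0 := by
    have := Gamma_pos_of_pos ht
    have : 0 < sqrt (2 * π * σ ^ 2) := sqrt_pos.mpr (by positivity)
    positivity
  have hnum : ∫ g in Ioi (0 : ℝ), g * jointDensity τ a γbar μ σ lam g =
      exp ((lam - γbar * a) * μ / σ ^ 2) / (sqrt (2 * π * σ ^ 2) * Gamma (τ * a)) *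
        gigIntegral (τ * a + 1 / 2) ((2 * σ ^ 2 + μ ^ 2) / (2 * σ ^ 2))
          ((lam - γbar * a) ^ 2 / (2 * σ ^ 2)) := by
    rw [gigIntegral, ← integral_const_mul]
    refine setIntegral_congr_fun measurableSet_Ioi fun g (hg : 0 < g) => ?_
    rw [jointDensity_eq hσ hg, show τ * a + 1 / 2 - 1 = 1 + (τ * a - 1 / 2 - 1) by ring,
      rpow_add hg, rpow_one]
    ring
  have hden : ∫ g in Ioi (0 : ℝ), jointDensity τ a γbar μ σ lam g =
      exp ((lam - γbar * a) * μ / σ ^ 2) / (sqrt (2 * π * σ ^ 2) * Gamma (τ * a)) *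
        gigIntegral (τ * a - 1 / 2) ((2 * σ ^ 2 + μ ^ 2) / (2 * σ ^ 2))
          ((lam - γbar * a) ^ 2 / (2 * σ ^ 2)) := by
    rw [gigIntegral, ← integral_const_mul]
    exact setIntegral_congr_fun measurableSet_Ioi fun g (hg : 0 < g) =>
      jointDensity_eq hσ hg
  rw [condMeanGamma, hnum, hden, mul_div_mul_left _ _ hC]

/-- Small-`|λ − γ̄a|` behaviour of `E[Γ | Λ = λ]`: if `τa < 1/2`, then
`E[Γ | Λ = λ] = (Γ(τa+1/2)/Γ(1/2−τa)) (2σ²)^{2τa} (2σ²+μ²)^{−(2τa+1)/2}`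
`· |λ − γ̄a|^{1−2τa} (1 + o(1))` as `λ → γ̄a`, while if `τa > 1/2` it converges
to `(τa − 1/2)·2σ²/(2σ²+μ²)`. -/
theorem condMeanGamma_asymptotics (τ a γbar μ σ : ℝ)
    (hτ : 0 < τ) (ha : 0 < a) (hσ : 0 < σ) :
    (τ * a < 1 / 2 →
      Tendsto (fun lam =>
          condMeanGamma τ a γbar μ σ lam /
            (Real.Gamma (τ * a + 1 / 2) / Real.Gamma (1 / 2 - τ * a) *
              ((2 * σ ^ 2) ^ (2 * (τ * a)) /
                (2 * σ ^ 2 + μ ^ 2) ^ ((2 * (τ * a) + 1) / 2)) *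
              |lam - γbar * a| ^ (1 - 2 * (τ * a))))
        (𝓝[≠] (γbar * a)) (𝓝 1)) ∧
    (1 / 2 < τ * a →
      Tendsto (fun lam => condMeanGamma τ a γbar μ σ lam)
        (𝓝[≠] (γbar * a)) (𝓝 ((τ * a - 1 / 2) * (2 * σ ^ 2) / (2 * σ ^ 2 + μ ^ 2)))) := by
  have ht : 0 < τ * a := mul_pos hτ ha
  have hs : 0 < 2 * σ ^ 2 := by positivity
  have hc : 0 < (2 * σ ^ 2 + μ ^ 2) / (2 * σ ^ 2) := by positivity
  have hb := tendsto_sub_sq_div_nhdsGT_zero (γbar * a) hs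
  simp only [condMeanGamma_eq _ ht hσ.ne']
  refine ⟨fun hlt => ?_, fun hgt => ?_⟩
  · have h := (tendsto_gigIntegral_add_one_div_mul_rpow (ν := τ * a - 1 / 2) (by linarith)
      (by linarith) hc).comp hb
    have hL : Gamma (τ * a + 1 / 2) / Gamma (1 / 2 - τ * a) /
        ((2 * σ ^ 2 + μ ^ 2) / (2 * σ ^ 2)) ^ (τ * a + 1 / 2) ≠ 0 := by
      have := Gamma_pos_of_pos (show 0 < τ * a + 1 / 2 by linarith)
      have := Gamma_pos_of_pos (show 0 < 1 / 2 - τ * a by linarith)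
      positivity
    rw [show τ * a - 1 / 2 + 1 = τ * a + 1 / 2 by ring, neg_sub] at h
    have h1 := div_self hL ▸ h.div_const (Gamma (τ * a + 1 / 2) / Gamma (1 / 2 - τ * a) /
      ((2 * σ ^ 2 + μ ^ 2) / (2 * σ ^ 2)) ^ (τ * a + 1 / 2))
    refine h1.congr' ?_
    filter_upwards [self_mem_nhdsWithin] with lam (hlam : lam ≠ γbar * a)
    have hδ : lam - γbar * a ≠ 0 := sub_ne_zero.mpr hlam
    rw [Function.comp_apply, ← mul_abs_rpow_mul_sq_div_rpow _ _ hs (by positivity) hδ,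
      mul_div_mul_right _ _ (by positivity)]
  · have h := (tendsto_gigIntegral_add_one_div (ν := τ * a - 1 / 2) (by linarith) hc).comp hb
    rw [show τ * a - 1 / 2 + 1 = τ * a + 1 / 2 by ring] at h
    rwa [← div_div_eq_mul_div]
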